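/- Let Γ ⊆ Σ be finite and nonempty, let a₁, …, aₙ ∈ Γ (n ≥ 0), and let u₁, …, uₘ (m ≥ 1) be generalized words each of one of the forms Γ^{η}, c Γ^{η}, Γ^{η} c, or c Γ^{η} d with c, d ∈ Γ, such that every element of Γ occurs in some a_i or u_j. Then the shuffle [a₁, …, aₙ, u₁, …, uₘ]^{η} is isomorphic to Γ^{η}. -/

import Mathlib

/-- `c : ℚ → S` is the dense `Γ`-coloring of the rationals (the word `Γ^η`). -/
def GammaEta {S : Type*} (Γ : Finset S) (c : ℚ → S) : Prop :=
  (∀ x, c x ∈ Γ) ∧ ∀ q r : ℚ, q < r → ∀ a ∈ Γ, ∃ x : ℚ, q < x ∧ x < r ∧ c x = a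

/-- Isomorphism of colored linear orders. -/
def ColoredIso {α β S : Type*} [LinearOrder α] [LinearOrder β]
    (cα : α → S) (cβ : β → S) : Prop :=
  ∃ e : α ≃o β, ∀ x, cβ (e x) = cα x

/-- Domain of a component word: `k` optional left endpoints, then `e` copies of
`ℚ`, then `r` optional right endpoints. With `(k,e,r) = (1,0,0)` this is a
singleton word; with `e = 1` and `k, r ≤ 1` it models the four forms
`Γ^η`, `c Γ^η`, `Γ^η c`, `c Γ^η d`. -/
def Fib (k e r : ℕ) : Type := Fin k ⊕ₗ ((Fin e ×ₗ ℚ) ⊕ₗ Fin r)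

instance (k e r : ℕ) : LinearOrder (Fib k e r) :=
  inferInstanceAs (LinearOrder (Fin k ⊕ₗ ((Fin e ×ₗ ℚ) ⊕ₗ Fin r)))

/-!
Both the shuffle and `Γ^η` are countable linear orders without endpoints in which every colour of
`Γ` is dense, and the coloured form of Cantor's back-and-forth argument makes any two such orders
isomorphic. Inside a component the colours are dense because the endpoints `c`, `d` of a word
`c Γ^η d` are adjacent to a copy of `Γ^η`; between two components they are dense because the shuffle
places a copy of `u₁`, which realises every colour of `Γ`, between any two points of `ℚ`.
-/

section

variable {S : Type*}

instance {α : Type*} [Countable α] : Countable (Lex α) := ‹Countable α›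

instance (k e r : ℕ) : Countable (Fib k e r) :=
  inferInstanceAs (Countable (Fin k ⊕ₗ ((Fin e ×ₗ ℚ) ⊕ₗ Fin r)))

structure IsDenseColoring {α : Type*} [LinearOrder α] (Γ : Set S) (c : α → S) : Prop where
  mem : ∀ x, c x ∈ Γ
  exists_between : ∀ ⦃x y⦄, x < y → ∀ a ∈ Γ, ∃ z, x < z ∧ z < y ∧ c z = a

theorem GammaEta.isDenseColoring {Γ : Finset S} {c : ℚ → S} (h : GammaEta Γ c) :
    IsDenseColoring (Γ : Set S) c :=
  ⟨h.1, h.2⟩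

namespace IsDenseColoring

variable {α β : Type*} [LinearOrder α] [LinearOrder β] {Γ : Set S} {a : S}

theorem of_subsingleton [Subsingleton α] {c : α → S} (h : ∀ x, c x ∈ Γ) : IsDenseColoring Γ c :=
  ⟨h, fun x y hxy => absurd (Subsingleton.elim x y) hxy.ne⟩

theorem denselyOrdered {c : α → S} (h : IsDenseColoring Γ c) (ha : a ∈ Γ) : DenselyOrdered α :=
  ⟨fun _ _ hxy => (h.exists_between hxy a ha).imp fun _ hz => ⟨hz.1, hz.2.1⟩⟩

theorem exists_gt [NoMaxOrder α] {c : α → S} (h : IsDenseColoring Γ c) (x : α) (ha : a ∈ Γ) :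
    ∃ z, x < z ∧ c z = a := by
  obtain ⟨y, hxy⟩ := NoMaxOrder.exists_gt x
  obtain ⟨z, hxz, -, hz⟩ := h.exists_between hxy a ha
  exact ⟨z, hxz, hz⟩

theorem exists_lt [NoMinOrder α] {c : α → S} (h : IsDenseColoring Γ c) (x : α) (ha : a ∈ Γ) :
    ∃ z, z < x ∧ c z = a := by
  obtain ⟨y, hyx⟩ := NoMinOrder.exists_lt x
  obtain ⟨z, -, hzx, hz⟩ := h.exists_between hyx a ha
  exact ⟨z, hzx, hz⟩

theorem exists_between_finsets [NoMinOrder α] [NoMaxOrder α] [Nonempty α] {c : α → S}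
    (h : IsDenseColoring Γ c) (lo hi : Finset α) (lo_lt_hi : ∀ x ∈ lo, ∀ y ∈ hi, x < y)
    (ha : a ∈ Γ) : ∃ z, (∀ x ∈ lo, x < z) ∧ (∀ y ∈ hi, z < y) ∧ c z = a := by
  have := h.denselyOrdered ha
  obtain ⟨m, hlo, hhi⟩ := Order.exists_between_finsets lo hi lo_lt_hi
  obtain ⟨m', hlo', hm'm⟩ := Order.exists_between_finsets lo {m} (by simpa using hlo)
  obtain ⟨z, hm'z, hzm, hz⟩ := h.exists_between (hm'm m (Finset.mem_singleton_self m)) a ha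
  exact ⟨z, fun x hx => (hlo' x hx).trans hm'z, fun y hy => hzm.trans (hhi y hy), hz⟩

theorem sumLex {c : α ⊕ₗ β → S} (hl : IsDenseColoring Γ fun x => c (toLex (Sum.inl x)))
    (hr : IsDenseColoring Γ fun y => c (toLex (Sum.inr y)))
    (hlr : ∀ x y, ∀ a ∈ Γ,
      (∃ z, x < z ∧ c (toLex (Sum.inl z)) = a) ∨ ∃ z, z < y ∧ c (toLex (Sum.inr z)) = a) :
    IsDenseColoring Γ c := by
  refine ⟨?_, ?_⟩
  · rintro (x | y)
    exacts [hl.mem x, hr.mem y]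
  · rintro (x | y) (x' | y') hxy a ha
    · obtain ⟨z, h₁, h₂, hz⟩ := hl.exists_between (Sum.Lex.inl_lt_inl_iff.1 hxy) a ha
      exact ⟨toLex (Sum.inl z), Sum.Lex.inl_lt_inl_iff.2 h₁, Sum.Lex.inl_lt_inl_iff.2 h₂, hz⟩
    · rcases hlr x y' a ha with ⟨z, hxz, hz⟩ | ⟨z, hzy, hz⟩
      · exact ⟨toLex (Sum.inl z), Sum.Lex.inl_lt_inl_iff.2 hxz, Sum.Lex.inl_lt_inr _ _, hz⟩
      · exact ⟨toLex (Sum.inr z), Sum.Lex.inl_lt_inr _ _, Sum.Lex.inr_lt_inr_iff.2 hzy, hz⟩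
    · exact absurd hxy Sum.Lex.not_inr_lt_inl
    · obtain ⟨z, h₁, h₂, hz⟩ := hr.exists_between (Sum.Lex.inr_lt_inr_iff.1 hxy) a ha
      exact ⟨toLex (Sum.inr z), Sum.Lex.inr_lt_inr_iff.2 h₁, Sum.Lex.inr_lt_inr_iff.2 h₂, hz⟩

theorem prodLex [NoMaxOrder β] {c : α ×ₗ β → S}
    (h : ∀ i, IsDenseColoring Γ fun x => c (toLex (i, x))) : IsDenseColoring Γ c := by
  refine ⟨fun x => (h (ofLex x).1).mem (ofLex x).2, ?_⟩
  rintro ⟨i, x⟩ ⟨j, y⟩ hxy a ha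
  rcases Prod.Lex.toLex_lt_toLex.1 hxy with hij | ⟨rfl, hxy⟩
  · obtain ⟨z, hxz, hz⟩ := (h i).exists_gt x ha
    exact ⟨toLex (i, z), Prod.Lex.toLex_lt_toLex.2 (.inr ⟨rfl, hxz⟩),
      Prod.Lex.toLex_lt_toLex.2 (.inl hij), hz⟩
  · obtain ⟨z, h₁, h₂, hz⟩ := (h i).exists_between hxy a ha
    exact ⟨toLex (i, z), Prod.Lex.toLex_lt_toLex.2 (.inr ⟨rfl, h₁⟩),
      Prod.Lex.toLex_lt_toLex.2 (.inr ⟨rfl, h₂⟩), hz⟩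

theorem sigmaLex {ι : Type*} [LinearOrder ι] {F : ι → Type*} [∀ i, LinearOrder (F i)]
    {c : ∀ i, F i → S} (h : ∀ i, IsDenseColoring Γ (c i))
    (hfull : ∀ i j, i < j → ∃ l, i < l ∧ l < j ∧ ∀ a ∈ Γ, ∃ x, c l x = a) :
    IsDenseColoring Γ fun x : Σₗ i, F i => c (ofLex x).1 (ofLex x).2 := by
  refine ⟨fun x => (h _).mem _, ?_⟩
  rintro ⟨i, x⟩ ⟨j, y⟩ hxy a ha
  rcases Sigma.Lex.lt_def.1 hxy with hij | ⟨hij, hxy⟩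
  · obtain ⟨l, hil, hlj, hl⟩ := hfull i j hij
    obtain ⟨z, hz⟩ := hl a ha
    exact ⟨toLex ⟨l, z⟩, Sigma.Lex.lt_def.2 (.inl hil), Sigma.Lex.lt_def.2 (.inl hlj), hz⟩
  · obtain rfl : i = j := hij
    obtain ⟨z, h₁, h₂, hz⟩ := (h i).exists_between hxy a ha
    exact ⟨toLex ⟨i, z⟩, Sigma.Lex.lt_def.2 (.inr ⟨rfl, h₁⟩),
      Sigma.Lex.lt_def.2 (.inr ⟨rfl, h₂⟩), hz⟩

end IsDenseColoring

section BackAndForth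

variable {α β : Type*} [LinearOrder α] [LinearOrder β]

def ColoredPartialIso (c₁ : α → S) (c₂ : β → S) : Type _ :=
  { f : Finset (α × β) //
    (∀ p ∈ f, ∀ q ∈ f, cmp p.1 q.1 = cmp p.2 q.2) ∧ ∀ p ∈ f, c₂ p.2 = c₁ p.1 }

namespace ColoredPartialIso

variable {c₁ : α → S} {c₂ : β → S} {Γ : Set S}

instance : Preorder (ColoredPartialIso c₁ c₂) := Subtype.preorder _

instance : Inhabited (ColoredPartialIso c₁ c₂) := ⟨⟨∅, by simp, by simp⟩⟩

def swap (f : ColoredPartialIso c₁ c₂) : ColoredPartialIso c₂ c₁ :=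
  ⟨f.val.image Prod.swap,
    Finset.forall_mem_image.2 fun p hp =>
      Finset.forall_mem_image.2 fun q hq => (f.prop.1 p hp q hq).symm,
    Finset.forall_mem_image.2 fun p hp => (f.prop.2 p hp).symm⟩

def insert (f : ColoredPartialIso c₁ c₂) (a : α) (b : β)
    (hab : ∀ p ∈ f.val, cmp p.1 a = cmp p.2 b) (hc : c₂ b = c₁ a) : ColoredPartialIso c₁ c₂ :=
  ⟨Insert.insert (a, b) f.val, by
    simp only [Finset.forall_mem_insert, cmp_self_eq_eq, true_and]
    exact ⟨fun q hq => by rw [cmp_eq_cmp_symm]; exact hab q hq,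
      fun p hp => ⟨hab p hp, f.prop.1 p hp⟩⟩,
    Finset.forall_mem_insert _ _ _ |>.2 ⟨hc, f.prop.2⟩⟩

theorem exists_across [NoMinOrder β] [NoMaxOrder β] [Nonempty β]
    (h₁ : ∀ x, c₁ x ∈ Γ) (h₂ : IsDenseColoring Γ c₂) (f : ColoredPartialIso c₁ c₂) (a : α) :
    ∃ b, c₂ b = c₁ a ∧ ∀ p ∈ f.val, cmp p.1 a = cmp p.2 b := by
  by_cases h : ∃ b, (a, b) ∈ f.val
  · obtain ⟨b, hb⟩ := h
    exact ⟨b, f.prop.2 _ hb, fun p hp => f.prop.1 _ hp _ hb⟩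
  have lo_lt_hi : ∀ x ∈ {p ∈ f.val | p.1 < a}.image Prod.snd,
      ∀ y ∈ {p ∈ f.val | a < p.1}.image Prod.snd, x < y := by
    simp only [Finset.mem_image, Finset.mem_filter]
    rintro _ ⟨p, ⟨hp, hpa⟩, rfl⟩ _ ⟨q, ⟨hq, haq⟩, rfl⟩
    exact (lt_iff_lt_of_cmp_eq_cmp (f.prop.1 p hp q hq)).1 (hpa.trans haq)
  obtain ⟨b, hlo, hhi, hb⟩ := h₂.exists_between_finsets _ _ lo_lt_hi (h₁ a)
  refine ⟨b, hb, fun p hp => ?_⟩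
  rcases lt_or_gt_of_ne fun hpa : p.1 = a => h ⟨p.2, hpa ▸ hp⟩ with hpa | hap
  · have hpb := hlo p.2 (Finset.mem_image_of_mem _ (Finset.mem_filter.2 ⟨hp, hpa⟩))
    rw [(cmp_eq_lt_iff _ _).2 hpa, (cmp_eq_lt_iff _ _).2 hpb]
  · have hbp := hhi p.2 (Finset.mem_image_of_mem _ (Finset.mem_filter.2 ⟨hp, hap⟩))
    rw [(cmp_eq_gt_iff _ _).2 hap, (cmp_eq_gt_iff _ _).2 hbp]

def definedAtLeft [NoMinOrder β] [NoMaxOrder β] [Nonempty β] (h₁ : ∀ x, c₁ x ∈ Γ)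
    (h₂ : IsDenseColoring Γ c₂) (a : α) : Order.Cofinal (ColoredPartialIso c₁ c₂) where
  carrier := {f | ∃ b, (a, b) ∈ f.val}
  isCofinal f := by
    obtain ⟨b, hc, hab⟩ := exists_across h₁ h₂ f a
    exact ⟨f.insert a b hab hc, ⟨b, Finset.mem_insert_self _ _⟩, Finset.subset_insert _ _⟩

def definedAtRight [NoMinOrder α] [NoMaxOrder α] [Nonempty α] (h₁ : IsDenseColoring Γ c₁)
    (h₂ : ∀ y, c₂ y ∈ Γ) (b : β) : Order.Cofinal (ColoredPartialIso c₁ c₂) where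
  carrier := {f | ∃ a, (a, b) ∈ f.val}
  isCofinal f := by
    obtain ⟨a, hc, hba⟩ := exists_across h₂ h₁ f.swap b
    have hab : ∀ p ∈ f.val, cmp p.1 a = cmp p.2 b := fun p hp =>
      (hba p.swap (Finset.mem_image_of_mem _ hp)).symm
    exact ⟨f.insert a b hab hc.symm, ⟨a, Finset.mem_insert_self _ _⟩, Finset.subset_insert _ _⟩

end ColoredPartialIso

open ColoredPartialIso in
theorem coloredIso_of_isDenseColoring [Countable α] [Countable β] [Nonempty α] [Nonempty β]
    [NoMinOrder α] [NoMaxOrder α] [NoMinOrder β] [NoMaxOrder β] {Γ : Set S} {c₁ : α → S}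
    {c₂ : β → S} (h₁ : IsDenseColoring Γ c₁) (h₂ : IsDenseColoring Γ c₂) : ColoredIso c₁ c₂ := by
  cases nonempty_encodable (α ⊕ β)
  let cofinal : α ⊕ β → Order.Cofinal (ColoredPartialIso c₁ c₂) :=
    Sum.elim (definedAtLeft h₁.mem h₂) (definedAtRight h₁ h₂.mem)
  let I := Order.idealOfCofinals default cofinal
  have forth : ∀ a, ∃ b, ∃ f ∈ I, (a, b) ∈ f.val := fun a => by
    obtain ⟨f, ⟨b, hb⟩, hf⟩ := Order.cofinal_meets_idealOfCofinals default cofinal (.inl a)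
    exact ⟨b, f, hf, hb⟩
  have back : ∀ b, ∃ a, ∃ f ∈ I, (a, b) ∈ f.val := fun b => by
    obtain ⟨f, ⟨a, ha⟩, hf⟩ := Order.cofinal_meets_idealOfCofinals default cofinal (.inr b)
    exact ⟨a, f, hf, ha⟩
  choose F hF using forth
  choose G hG using back
  have hFG : ∀ a b, cmp a (G b) = cmp (F a) b := fun a b => by
    obtain ⟨f, hf, ha⟩ := hF a
    obtain ⟨g, hg, hb⟩ := hG b
    obtain ⟨m, -, hfm, hgm⟩ := I.directed _ hf _ hg
    exact m.prop.1 _ (hfm ha) _ (hgm hb)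
  refine ⟨OrderIso.ofCmpEqCmp F G hFG, fun a => ?_⟩
  obtain ⟨f, -, ha⟩ := hF a
  exact f.prop.2 _ ha

end BackAndForth

namespace Fib

variable {k e r : ℕ}

theorem subsingleton (hk : k ≤ 1) (he : e = 0) (hr : r = 0) : Subsingleton (Fib k e r) := by
  subst he hr
  have : Subsingleton (Fin k) := Fin.subsingleton_iff_le_one.2 hk
  refine ⟨fun x y => ?_⟩
  rcases x with x | (p | d)
  · rcases y with y | (q | d)
    · exact congrArg (toLex ∘ Sum.inl) (Subsingleton.elim x y)
    · exact (ofLex q).1.elim0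
    · exact d.elim0
  · exact (ofLex p).1.elim0
  · exact d.elim0

theorem nonempty_of_pos_left (hk : 0 < k) : Nonempty (Fib k e r) :=
  ⟨toLex (Sum.inl ⟨0, hk⟩)⟩

theorem nonempty_of_pos_mid (he : 0 < e) : Nonempty (Fib k e r) :=
  ⟨toLex (Sum.inr (toLex (Sum.inl (toLex (⟨0, he⟩, 0)))))⟩

variable {Γ : Finset S} {col : Fib k e r → S}

theorem exists_col_eq (he : 0 < e)
    (hη : ∀ i, GammaEta Γ fun q => col (toLex (Sum.inr (toLex (Sum.inl (toLex (i, q)))))))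
    {a : S} (ha : a ∈ Γ) : ∃ x, col x = a := by
  obtain ⟨q, -, -, hq⟩ := (hη ⟨0, he⟩).2 0 1 one_pos a ha
  exact ⟨_, hq⟩

theorem isDenseColoring (hk : k ≤ 1) (he : 0 < e) (hr : r ≤ 1)
    (hη : ∀ i, GammaEta Γ fun q => col (toLex (Sum.inr (toLex (Sum.inl (toLex (i, q)))))))
    (hl : ∀ x, col (toLex (Sum.inl x)) ∈ Γ)
    (hr' : ∀ x, col (toLex (Sum.inr (toLex (Sum.inr x)))) ∈ Γ) :
    IsDenseColoring (Γ : Set S) col := by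
  have : Subsingleton (Fin k) := Fin.subsingleton_iff_le_one.2 hk
  have : Subsingleton (Fin r) := Fin.subsingleton_iff_le_one.2 hr
  have hP : IsDenseColoring (Γ : Set S) fun p : Fin e ×ₗ ℚ =>
      col (toLex (Sum.inr (toLex (Sum.inl p)))) :=
    .prodLex fun i => (hη i).isDenseColoring
  have hM : IsDenseColoring (Γ : Set S) fun y : (Fin e ×ₗ ℚ) ⊕ₗ Fin r => col (toLex (Sum.inr y)) :=
    .sumLex hP (.of_subsingleton hr') fun p _ _ ha => .inl (hP.exists_gt p ha)
  refine .sumLex (.of_subsingleton hl) hM fun _ y a ha => .inr ?_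
  rcases y with p | d
  · obtain ⟨z, hzp, hz⟩ := hP.exists_lt p ha
    exact ⟨toLex (Sum.inl z), Sum.Lex.inl_lt_inl_iff.2 hzp, hz⟩
  · obtain ⟨z, -, hz⟩ := hP.exists_lt (toLex (⟨0, he⟩, 0)) ha
    exact ⟨toLex (Sum.inl z), Sum.Lex.inl_lt_inr _ _, hz⟩

end Fib

end

theorem shuffle_of_uniform_components_general {S : Type*} (Γ : Finset S)
    (n m : ℕ) (hm : 1 ≤ m)
    (k e r : Fin (n + m) → ℕ)
    (col : ∀ j : Fin (n + m), Fib (k j) (e j) (r j) → S)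
    (a : Fin (n + m) → S)
    -- the first `n` components are singleton words colored by letters of `Γ`
    (hsing : ∀ j : Fin (n + m), (j : ℕ) < n →
      k j = 1 ∧ e j = 0 ∧ r j = 0 ∧ a j ∈ Γ ∧ ∀ x, col j x = a j)
    -- the last `m` components have one of the forms `Γ^η`, `cΓ^η`, `Γ^η c`, `cΓ^η d`
    (hunif : ∀ j : Fin (n + m), n ≤ (j : ℕ) →
      e j = 1 ∧ k j ≤ 1 ∧ r j ≤ 1 ∧
      (∀ i : Fin (e j),
        GammaEta Γ (fun q => col j (toLex (Sum.inr (toLex (Sum.inl (toLex (i, q)))))))) ∧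
      (∀ x : Fin (k j), col j (toLex (Sum.inl x)) ∈ Γ) ∧
      (∀ x : Fin (r j), col j (toLex (Sum.inr (toLex (Sum.inr x)))) ∈ Γ))
    -- the shuffling function: each component index occurs densely
    (φ : ℚ → Fin (n + m))
    (hφ : ∀ q r' : ℚ, q < r' → ∀ j, ∃ x : ℚ, q < x ∧ x < r' ∧ φ x = j)
    (c : ℚ → S) (hc : GammaEta Γ c) :
    ColoredIso
      (fun x : Σₗ q : ℚ, Fib (k (φ q)) (e (φ q)) (r (φ q)) =>
        col (φ (ofLex x).1) (ofLex x).2)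
      c := by
  have hcomponent :
      ∀ j, Nonempty (Fib (k j) (e j) (r j)) ∧ IsDenseColoring (Γ : Set S) (col j) := by
    intro j
    rcases lt_or_ge (j : ℕ) n with hj | hj
    · obtain ⟨hk, he, hr, ha, hcol⟩ := hsing j hj
      have := Fib.subsingleton hk.le he hr
      exact ⟨Fib.nonempty_of_pos_left (by omega), .of_subsingleton fun x => hcol x ▸ ha⟩
    · obtain ⟨he, hk, hr, hη, hl, hr'⟩ := hunif j hj
      exact ⟨Fib.nonempty_of_pos_mid (by omega), Fib.isDenseColoring hk (by omega) hr hη hl hr'⟩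
  have hfull : ∀ q q' : ℚ, q < q' →
      ∃ l, q < l ∧ l < q' ∧ ∀ a ∈ (Γ : Set S), ∃ x, col (φ l) x = a := by
    intro q q' hqq'
    obtain ⟨l, hql, hlq', hl⟩ := hφ q q' hqq' ⟨n, by omega⟩
    obtain ⟨he, -, -, hη, -, -⟩ := hunif (φ l) (by simp [hl])
    exact ⟨l, hql, hlq', fun a ha => Fib.exists_col_eq (by omega) hη ha⟩
  have := fun q => (hcomponent (φ q)).1
  exact coloredIso_of_isDenseColoring
    (.sigmaLex (fun q => (hcomponent (φ q)).2) hfull) hc.isDenseColoring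

/-- Shuffle absorption: if `a₁,…,aₙ ∈ Γ` (the singleton components, indices
`j < n`) and `u₁,…,uₘ` (`m ≥ 1`, indices `n ≤ j`) are words of one of the forms
`Γ^η`, `c Γ^η`, `Γ^η c`, `c Γ^η d` with `c,d ∈ Γ`, and every element of `Γ`
occurs in some component, then the shuffle `[a₁,…,aₙ,u₁,…,uₘ]^η` (a dense
`Fin (n+m)`-indexed sum over `ℚ`) is isomorphic to `Γ^η`. -/
theorem shuffle_of_uniform_components {S : Type*} (Γ : Finset S) (hΓ : Γ.Nonempty)
    (n m : ℕ) (hm : 1 ≤ m)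
    (k e r : Fin (n + m) → ℕ)
    (col : ∀ j : Fin (n + m), Fib (k j) (e j) (r j) → S)
    (a : Fin (n + m) → S)
    -- the first `n` components are singleton words colored by letters of `Γ`
    (hsing : ∀ j : Fin (n + m), (j : ℕ) < n →
      k j = 1 ∧ e j = 0 ∧ r j = 0 ∧ a j ∈ Γ ∧ ∀ x, col j x = a j)
    -- the last `m` components have one of the forms `Γ^η`, `cΓ^η`, `Γ^η c`, `cΓ^η d`
    (hunif : ∀ j : Fin (n + m), n ≤ (j : ℕ) →
      e j = 1 ∧ k j ≤ 1 ∧ r j ≤ 1 ∧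
      (∀ i : Fin (e j),
        GammaEta Γ (fun q => col j (toLex (Sum.inr (toLex (Sum.inl (toLex (i, q)))))))) ∧
      (∀ x : Fin (k j), col j (toLex (Sum.inl x)) ∈ Γ) ∧
      (∀ x : Fin (r j), col j (toLex (Sum.inr (toLex (Sum.inr x)))) ∈ Γ))
    -- every element of `Γ` occurs in some component
    (hcov : ∀ g ∈ Γ, ∃ j x, col j x = g)
    -- the shuffling function: each component index occurs densely
    (φ : ℚ → Fin (n + m))
    (hφ : ∀ q r' : ℚ, q < r' → ∀ j, ∃ x : ℚ, q < x ∧ x < r' ∧ φ x = j)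
    (c : ℚ → S) (hc : GammaEta Γ c) :
    ColoredIso
      (fun x : Σₗ q : ℚ, Fib (k (φ q)) (e (φ q)) (r (φ q)) =>
        col (φ (ofLex x).1) (ofLex x).2)
      c :=
  shuffle_of_uniform_components_general Γ n m hm k e r col a hsing hunif φ hφ c hc
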